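/- Let D ⊂ ℝ^d be compact and convex and ν a probability measure on D absolutely continuous with respect to Lebesgue measure. Fix pairwise distinct sites X = (x_1,…,x_n) and weights g ∈ ℝ^n, and define the regularized masses m_i^ε[X,g] = ∫_D χ_i^ε[X,g] dν and, when m_i^ε > 0, the regularized barycenters b_i^ε[X,g] = (m_i^ε[X,g])^{-1} ∫_D y χ_i^ε[X,g](y) dν(y). Then as ε → 0, m_i^ε[X,g] → m_i[X,g] for every i, and b_i^ε[X,g] → b_i[X,g] for every i with m_i[X,g] > 0. -/

import Mathlib

open MeasureTheory Set Filter Topology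
open scoped ENNReal NNReal

noncomputable section

/-- Euclidean space `ℝ^d`. -/
abbrev Euc (d : ℕ) : Type := EuclideanSpace ℝ (Fin d)

/-- `ρ ⪯ μ` in the convex order: `∫ ψ dρ ≤ ∫ ψ dμ` for every convex function `ψ` for which
both integrals exist. -/
def ConvexOrderLE {d : ℕ} (ρ μ : Measure (Euc d)) : Prop :=
  ∀ ψ : Euc d → ℝ, ConvexOn ℝ Set.univ ψ → Integrable ψ μ → Integrable ψ ρ →
    ∫ x, ψ x ∂ρ ≤ ∫ x, ψ x ∂μ

/-- The set of fusions of `ν`: probability measures supported on `D` that are dominated by `ν`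
in the convex order. -/
def fusions {d : ℕ} (D : Set (Euc d)) (ν : Measure (Euc d)) : Set (Measure (Euc d)) :=
  {ρ | IsProbabilityMeasure ρ ∧ ρ Dᶜ = 0 ∧ ConvexOrderLE ρ ν}

/-- The (topological) support of a measure. -/
def msupport {d : ℕ} (ρ : Measure (Euc d)) : Set (Euc d) := {x | ∀ U ∈ nhds x, ρ U ≠ 0}

/-- Laguerre cell of site `x_i` with weight `g_i` inside the domain `D`. -/
def LaguerreCell {d n : ℕ} (D : Set (Euc d)) (X : Fin n → Euc d) (g : Fin n → ℝ)
    (i : Fin n) : Set (Euc d) :=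
  {y ∈ D | ∀ j, ‖y - X i‖ ^ 2 - g i ≤ ‖y - X j‖ ^ 2 - g j}

/-- ν-mass of the `i`-th Laguerre cell. -/
def cellMass {d n : ℕ} (D : Set (Euc d)) (ν : Measure (Euc d)) (X : Fin n → Euc d)
    (g : Fin n → ℝ) (i : Fin n) : ℝ :=
  (ν (LaguerreCell D X g i)).toReal

/-- ν-barycenter of the `i`-th Laguerre cell. -/
def cellBary {d n : ℕ} (D : Set (Euc d)) (ν : Measure (Euc d)) (X : Fin n → Euc d)
    (g : Fin n → ℝ) (i : Fin n) : Euc d :=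
  (cellMass D ν X g i)⁻¹ • ∫ y in LaguerreCell D X g i, y ∂ν

/-- Entropy-regularized cell function
`χ_i^ε[X,g](y) = exp((g_i − |y−x_i|²)/ε) / Σ_j exp((g_j − |y−x_j|²)/ε)`. -/
def chiEps {d n : ℕ} (X : Fin n → Euc d) (g : Fin n → ℝ) (ε : ℝ) (i : Fin n)
    (y : Euc d) : ℝ :=
  Real.exp ((g i - ‖y - X i‖ ^ 2) / ε) / ∑ j, Real.exp ((g j - ‖y - X j‖ ^ 2) / ε)

/-- Regularized mass `m_i^ε[X,g] = ∫ χ_i^ε[X,g] dν`. -/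
def mEps {d n : ℕ} (ν : Measure (Euc d)) (X : Fin n → Euc d) (g : Fin n → ℝ) (ε : ℝ)
    (i : Fin n) : ℝ :=
  ∫ y, chiEps X g ε i y ∂ν

/-- Regularized barycenter `b_i^ε[X,g] = (m_i^ε)⁻¹ ∫ y χ_i^ε[X,g](y) dν(y)`. -/
def bEps {d n : ℕ} (ν : Measure (Euc d)) (X : Fin n → Euc d) (g : Fin n → ℝ) (ε : ℝ)
    (i : Fin n) : Euc d :=
  (mEps ν X g ε i)⁻¹ • ∫ y, chiEps X g ε i y • y ∂ν

/-!
Off the cell boundaries, `χ_i^ε(y)` is a softmax of the power values `g_j - ‖y - x_j‖²` and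
sharpens, as `ε → 0⁺`, to the indicator of the Laguerre cell `L_i`. The cell boundaries lie in the
hyperplanes where two power values coincide (the sites are distinct), which are Lebesgue-null and
hence `ν`-null. Since `0 ≤ χ_i^ε ≤ 1` and `ν` lives on the bounded set `D`, dominated convergence
gives `∫ χ_i^ε φ dν → ∫_{L_i} φ dν` for `φ = 1` and `φ = id`, i.e. the convergence of masses and,
where `m_i > 0`, of barycenters.
-/

section Hyperplane

variable {E : Type*} [NormedAddCommGroup E] [InnerProductSpace ℝ E] [FiniteDimensional ℝ E]
  [MeasurableSpace E] [BorelSpace E] (μ : Measure E) [μ.IsAddHaarMeasure]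

theorem addHaar_setOf_inner_eq {v : E} (hv : v ≠ 0) (r : ℝ) :
    μ {y | inner ℝ v y = r} = 0 := by
  have hvv : inner ℝ v v ≠ (0 : ℝ) := inner_self_ne_zero.mpr hv
  set p : E := (r / inner ℝ v v) • v
  have hp : inner ℝ v p = r := by rw [real_inner_smul_right, div_mul_cancel₀ _ hvv]
  have hset : {y : E | inner ℝ v y = r} = (AffineSubspace.mk' p (ℝ ∙ v)ᗮ : Set E) := by
    ext y
    rw [mem_ofPred_eq, SetLike.mem_coe, AffineSubspace.mem_mk',
      Submodule.mem_orthogonal_singleton_iff_inner_right, vsub_eq_sub, inner_sub_right, hp,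
      sub_eq_zero]
  rw [hset]
  refine Measure.addHaar_affineSubspace μ _ fun htop => hvv ?_
  have hpv : p + v ∈ AffineSubspace.mk' p (ℝ ∙ v)ᗮ := htop ▸ AffineSubspace.mem_top ℝ E _
  rwa [← SetLike.mem_coe, ← hset, mem_ofPred_eq, inner_add_right, hp, add_eq_left] at hpv

/-- The points at equal power distance from two distinct weighted sites form a hyperplane. -/
theorem addHaar_setOf_sub_norm_sub_sq_eq {x x' : E} (hx : x ≠ x') (c c' : ℝ) :
    μ {y | c - ‖y - x‖ ^ 2 = c' - ‖y - x'‖ ^ 2} = 0 := by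
  have hset : {y | c - ‖y - x‖ ^ 2 = c' - ‖y - x'‖ ^ 2}
      = {y | inner ℝ (x' - x) y = (‖x'‖ ^ 2 - ‖x‖ ^ 2 - c' + c) / 2} := by
    ext y
    simp only [mem_ofPred_eq, norm_sub_sq_real, inner_sub_left, real_inner_comm y]
    constructor <;> intro h <;> linarith
  rw [hset]
  exact addHaar_setOf_inner_eq μ (sub_ne_zero.mpr hx.symm) _

end Hyperplane

section Softmax

variable {ι : Type*} [Fintype ι] (a : ι → ℝ)

theorem tendsto_exp_div_nhdsGT_zero_of_neg {c : ℝ} (hc : c < 0) :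
    Tendsto (fun ε : ℝ => Real.exp (c / ε)) (𝓝[>] 0) (𝓝 0) := by
  have h : Tendsto (fun ε : ℝ => c / ε) (𝓝[>] 0) atBot := by
    simpa [div_eq_mul_inv] using tendsto_inv_nhdsGT_zero.const_mul_atTop_of_neg hc
  exact Real.tendsto_exp_atBot.comp h

theorem tendsto_exp_div_sum_exp_of_forall_lt {i : ι} (h : ∀ j ≠ i, a j < a i) :
    Tendsto (fun ε => Real.exp (a i / ε) / ∑ j, Real.exp (a j / ε)) (𝓝[>] 0) (𝓝 1) := by
  classical
  have hrw : ∀ ε, Real.exp (a i / ε) / ∑ j, Real.exp (a j / ε)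
      = (∑ j, Real.exp ((a j - a i) / ε))⁻¹ := fun ε => by
    simp only [sub_div, Real.exp_sub, ← Finset.sum_div, inv_div]
  have hsum : Tendsto (fun ε => ∑ j, Real.exp ((a j - a i) / ε)) (𝓝[>] 0)
      (𝓝 (∑ j, if j = i then 1 else 0)) := by
    refine tendsto_finsetSum _ fun j _ => ?_
    by_cases hj : j = i
    · simp [hj]
    · simpa [hj] using tendsto_exp_div_nhdsGT_zero_of_neg (sub_neg.mpr (h j hj))
  simp only [hrw]
  simpa using hsum.inv₀ (by simp)

theorem tendsto_exp_div_sum_exp_of_lt {i k : ι} (h : a i < a k) :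
    Tendsto (fun ε => Real.exp (a i / ε) / ∑ j, Real.exp (a j / ε)) (𝓝[>] 0) (𝓝 0) := by
  refine squeeze_zero (fun ε => by positivity) (fun ε => ?_)
    (tendsto_exp_div_nhdsGT_zero_of_neg (sub_neg.mpr h))
  calc Real.exp (a i / ε) / ∑ j, Real.exp (a j / ε)
      ≤ Real.exp (a i / ε) / Real.exp (a k / ε) :=
        div_le_div_of_nonneg_left (by positivity) (by positivity)
          (Finset.single_le_sum (f := fun j => Real.exp (a j / ε)) (fun j _ => (Real.exp_pos _).le)
            (Finset.mem_univ k))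
    _ = Real.exp ((a i - a k) / ε) := by rw [← Real.exp_sub, sub_div]

end Softmax

section DominatedConvergence

variable {α E ι : Type*} [MeasurableSpace α] {μ : Measure α} [NormedAddCommGroup E]
  [NormedSpace ℝ E] {l : Filter ι} [l.IsCountablyGenerated]

theorem tendsto_integral_smul_of_tendsto_indicator {F : ι → α → ℝ} {s : Set α}
    (hs : MeasurableSet s) {φ : α → E} (hφ : Integrable φ μ)
    (hF_meas : ∀ t, AEStronglyMeasurable (F t) μ) (hF_bound : ∀ t a, |F t a| ≤ 1)
    (hF_lim : ∀ᵐ a ∂μ, Tendsto (fun t => F t a) l (𝓝 (s.indicator 1 a))) :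
    Tendsto (fun t => ∫ a, F t a • φ a ∂μ) l (𝓝 (∫ a in s, φ a ∂μ)) := by
  rw [← integral_indicator hs]
  refine tendsto_integral_filter_of_dominated_convergence (fun a => ‖φ a‖)
    (Eventually.of_forall fun t => (hF_meas t).smul hφ.aestronglyMeasurable)
    (Eventually.of_forall fun t => Eventually.of_forall fun a => ?_) hφ.norm ?_
  · rw [norm_smul, Real.norm_eq_abs]
    exact mul_le_of_le_one_left (norm_nonneg _) (hF_bound t a)
  · filter_upwards [hF_lim] with a ha
    simpa only [← indicator_smul_apply_left, Pi.one_apply, one_smul] using ha.smul_const (φ a)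

end DominatedConvergence

section Laguerre

variable {d n : ℕ}

theorem isClosed_laguerreCell {D : Set (Euc d)} (hD : IsClosed D) (X : Fin n → Euc d)
    (g : Fin n → ℝ) (i : Fin n) : IsClosed (LaguerreCell D X g i) := by
  have hcell : LaguerreCell D X g i
      = D ∩ ⋂ j, {y | ‖y - X i‖ ^ 2 - g i ≤ ‖y - X j‖ ^ 2 - g j} := by
    ext y
    simp [LaguerreCell]
  rw [hcell]
  exact hD.inter (isClosed_iInter fun j => isClosed_le (by fun_prop) (by fun_prop))

variable (X : Fin n → Euc d) (g : Fin n → ℝ) (ε : ℝ) (i : Fin n)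

theorem chiEps_nonneg (y : Euc d) : 0 ≤ chiEps X g ε i y := by
  unfold chiEps
  positivity

theorem chiEps_le_one (y : Euc d) : chiEps X g ε i y ≤ 1 :=
  div_le_one_of_le₀ (Finset.single_le_sum (f := fun j => Real.exp ((g j - ‖y - X j‖ ^ 2) / ε))
    (fun j _ => (Real.exp_pos _).le) (Finset.mem_univ i)) (by positivity)

theorem continuous_chiEps : Continuous (chiEps X g ε i) :=
  Continuous.div (by fun_prop) (by fun_prop) fun _ =>
    (Finset.sum_pos (fun j _ => Real.exp_pos _) ⟨i, Finset.mem_univ i⟩).ne'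

theorem tendsto_chiEps_indicator {D : Set (Euc d)} {y : Euc d} (hyD : y ∈ D)
    (hy : ∀ j ≠ i, g j - ‖y - X j‖ ^ 2 ≠ g i - ‖y - X i‖ ^ 2) :
    Tendsto (fun ε => chiEps X g ε i y) (𝓝[>] 0)
      (𝓝 ((LaguerreCell D X g i).indicator 1 y)) := by
  by_cases hcell : y ∈ LaguerreCell D X g i
  · rw [indicator_of_mem hcell]
    refine tendsto_exp_div_sum_exp_of_forall_lt (fun j => g j - ‖y - X j‖ ^ 2) fun j hj => ?_
    exact lt_of_le_of_ne (by linarith [hcell.2 j]) (hy j hj)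
  · rw [indicator_of_notMem hcell]
    obtain ⟨k, hk⟩ : ∃ k, ‖y - X k‖ ^ 2 - g k < ‖y - X i‖ ^ 2 - g i := by
      by_contra! h
      exact hcell ⟨hyD, h⟩
    exact tendsto_exp_div_sum_exp_of_lt (fun j => g j - ‖y - X j‖ ^ 2) (k := k) (by linarith)

theorem ae_tendsto_chiEps_indicator {D : Set (Euc d)} {ν : Measure (Euc d)} (hνD : ν Dᶜ = 0)
    (hac : ν ≪ volume) (hX : Function.Injective X) :
    ∀ᵐ y ∂ν, Tendsto (fun ε => chiEps X g ε i y) (𝓝[>] 0)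
      (𝓝 ((LaguerreCell D X g i).indicator 1 y)) := by
  have hsep : ∀ᵐ y ∂ν, ∀ j ≠ i, g j - ‖y - X j‖ ^ 2 ≠ g i - ‖y - X i‖ ^ 2 := by
    refine ae_all_iff.mpr fun j => ?_
    by_cases hj : j = i
    · exact Eventually.of_forall fun _ h => (h hj).elim
    · refine measure_mono_null (fun y hy => ?_)
        (hac (addHaar_setOf_sub_norm_sub_sq_eq volume (hX.ne hj) (g j) (g i)))
      simp_all
  filter_upwards [measure_eq_zero_iff_ae_notMem.mp hνD, hsep] with y hyD hy
  exact tendsto_chiEps_indicator X g i (by simpa using hyD) hy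

theorem tendsto_integral_chiEps_smul {D : Set (Euc d)} (hD : IsClosed D) {ν : Measure (Euc d)}
    (hνD : ν Dᶜ = 0) (hac : ν ≪ volume) (hX : Function.Injective X) {E : Type*}
    [NormedAddCommGroup E] [NormedSpace ℝ E] {φ : Euc d → E} (hφ : Integrable φ ν) :
    Tendsto (fun ε => ∫ y, chiEps X g ε i y • φ y ∂ν) (𝓝[>] 0)
      (𝓝 (∫ y in LaguerreCell D X g i, φ y ∂ν)) :=
  tendsto_integral_smul_of_tendsto_indicator (isClosed_laguerreCell hD X g i).measurableSet hφ
    (fun ε => (continuous_chiEps X g ε i).aestronglyMeasurable)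
    (fun ε y => abs_le.mpr ⟨by linarith [chiEps_nonneg X g ε i y], chiEps_le_one X g ε i y⟩)
    (ae_tendsto_chiEps_indicator X g i hνD hac hX)

end Laguerre

theorem mEps_bEps_convergence_general
    {d : ℕ} (D : Set (Euc d)) (hD : IsCompact D)
    (ν : Measure (Euc d)) [IsProbabilityMeasure ν] (hνD : ν Dᶜ = 0)
    (hac : ν ≪ (volume : Measure (Euc d)))
    {n : ℕ} (X : Fin n → Euc d) (hX : Function.Injective X) (g : Fin n → ℝ) :
    (∀ i, Tendsto (fun ε => mEps ν X g ε i) (𝓝[>] (0 : ℝ)) (𝓝 (cellMass D ν X g i))) ∧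
    (∀ i, 0 < cellMass D ν X g i →
      Tendsto (fun ε => bEps ν X g ε i) (𝓝[>] (0 : ℝ)) (𝓝 (cellBary D ν X g i))) := by
  have hmass (i : Fin n) :
      Tendsto (fun ε => mEps ν X g ε i) (𝓝[>] 0) (𝓝 (cellMass D ν X g i)) := by
    simpa [mEps, cellMass, Measure.real] using
      tendsto_integral_chiEps_smul X g i hD.isClosed hνD hac hX (integrable_const (1 : ℝ))
  refine ⟨hmass, fun i hm => ?_⟩
  obtain ⟨R, hR⟩ := hD.isBounded.exists_norm_le
  have hid : Integrable id ν := Integrable.of_bound aestronglyMeasurable_id R <| by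
    filter_upwards [measure_eq_zero_iff_ae_notMem.mp hνD] with y hy using hR y (by simpa using hy)
  exact ((hmass i).inv₀ hm.ne').smul
    (tendsto_integral_chiEps_smul X g i hD.isClosed hνD hac hX hid)

/-- as `ε → 0`, the regularized masses `m_i^ε[X,g]` converge to the cell
masses `m_i[X,g]`, and the regularized barycenters `b_i^ε[X,g]` converge to the cell
barycenters `b_i[X,g]` whenever `m_i[X,g] > 0`. -/
theorem mEps_bEps_convergence
    {d : ℕ} (D : Set (Euc d)) (hD : IsCompact D) (hDconv : Convex ℝ D)
    (ν : Measure (Euc d)) [IsProbabilityMeasure ν] (hνD : ν Dᶜ = 0)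
    (hac : ν ≪ (volume : Measure (Euc d)))
    {n : ℕ} (hn : 0 < n) (X : Fin n → Euc d) (hX : Function.Injective X) (g : Fin n → ℝ) :
    (∀ i, Tendsto (fun ε => mEps ν X g ε i) (𝓝[>] (0 : ℝ)) (𝓝 (cellMass D ν X g i))) ∧
    (∀ i, 0 < cellMass D ν X g i →
      Tendsto (fun ε => bEps ν X g ε i) (𝓝[>] (0 : ℝ)) (𝓝 (cellBary D ν X g i))) :=
  mEps_bEps_convergence_general D hD ν hνD hac X hX g
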